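/- arXiv:2405.07835 — 3 statements merged into one kernel-verified Lean document; each statement's English description precedes it below -/
import Mathlib

section
/- Let x_1, …, x_m : Fin n → ℝ be monotone nondecreasing vectors and let μ : Fin n → ℝ be their coordinatewise mean, μ i = (1/m) ∑_{k=1}^m x_k i. Then for every y : Fin n → ℝ, ∑_{k=1}^m d(μ, x_k)² ≤ ∑_{k=1}^m d(y, x_k)², where d(a,b)² = min over permutations σ of Fin n of ∑_i (a i − b (σ i))². That is, the coordinatewise mean of the sorted vectors minimizes the sum of squared Wasserstein-type distances. -/
/-- The squared Wasserstein-type distance between two vectors `a b : Fin n → ℝ`: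
the minimum over all permutations `σ` of `Fin n` of `∑ i, (a i - b (σ i))²`. -/
noncomputable def wsq (n : ℕ) (a b : Fin n → ℝ) : ℝ :=
  ⨅ σ : Equiv.Perm (Fin n), ∑ i, (a i - b (σ i)) ^ 2

/-! Fix optimal permutations `σ k` matching `y` with each `x k`, and put `z k := x k ∘ σ k`.
Coordinatewise, `∑ k, (t - c k)²` is minimised at the mean `t = (∑ k, c k) / m` with minimum
`∑ k, c k² - (∑ k, c k)² / m`. Hence the right-hand side is at least
`∑ i, ∑ k, z k i² - ∑ i, (∑ k, z k i)² / m`, while the identity permutation bounds the left-hand side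
by the same expression for `x`. The first terms agree, and the rearrangement inequality for the
pairwise monovarying `x k` shows that permuting them can only decrease `∑ i, (∑ k, x k i)²`. -/

open Finset

section Deviation

variable {ι : Type*} [Fintype ι]

lemma sum_sub_sq_eq (c : ι → ℝ) (t : ℝ) :
    ∑ k, (t - c k) ^ 2 = ∑ k, c k ^ 2 - (∑ k, c k) ^ 2 / Fintype.card ι
      + (Fintype.card ι * t - ∑ k, c k) ^ 2 / Fintype.card ι := by
  have hexpand : ∑ k, (t - c k) ^ 2 =
      Fintype.card ι * t ^ 2 - 2 * t * ∑ k, c k + ∑ k, c k ^ 2 := by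
    simp only [sub_sq, sum_add_distrib, sum_sub_distrib, sum_const, card_univ, nsmul_eq_mul,
      mul_sum]
  rw [hexpand]
  rcases isEmpty_or_nonempty ι with hι | hι
  · simp
  · have : (Fintype.card ι : ℝ) ≠ 0 := by positivity
    field_simp
    ring

lemma sum_sq_sub_sq_sum_div_le_sum_sub_sq (c : ι → ℝ) (t : ℝ) :
    ∑ k, c k ^ 2 - (∑ k, c k) ^ 2 / Fintype.card ι ≤ ∑ k, (t - c k) ^ 2 := by
  rw [sum_sub_sq_eq c t]
  exact le_add_of_nonneg_right (by positivity)

lemma sum_mean_sub_sq (c : ι → ℝ) :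
    ∑ k, ((∑ j, c j) / Fintype.card ι - c k) ^ 2
      = ∑ k, c k ^ 2 - (∑ k, c k) ^ 2 / Fintype.card ι := by
  have hmean : (Fintype.card ι : ℝ) * ((∑ j, c j) / Fintype.card ι) = ∑ j, c j := by
    rcases isEmpty_or_nonempty ι with hι | hι
    · simp
    · exact mul_div_cancel₀ _ (by positivity)
  rw [sum_sub_sq_eq, hmean, sub_self]
  simp

end Deviation

lemma sum_sq_sum_comp_perm_le {ι κ α : Type*} [Fintype ι] [Fintype κ] [CommRing α]
    [LinearOrder α] [IsStrictOrderedRing α] (x : κ → ι → α) (hx : ∀ k l, Monovary (x k) (x l))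
    (σ : κ → Equiv.Perm ι) :
    ∑ i, (∑ k, x k (σ k i)) ^ 2 ≤ ∑ i, (∑ k, x k i) ^ 2 := by
  have hexpand (v : κ → ι → α) : ∑ i, (∑ k, v k i) ^ 2 = ∑ k, ∑ l, ∑ i, v k i * v l i := by
    simp only [sq, sum_mul_sum]
    rw [sum_comm]
    exact sum_congr rfl fun _ _ => sum_comm
  rw [hexpand, hexpand]
  refine sum_le_sum fun k _ => sum_le_sum fun l _ => ?_
  calc ∑ i, x k (σ k i) * x l (σ l i) = ∑ j, x k j * x l (((σ k).symm.trans (σ l)) j) :=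
        Fintype.sum_equiv (σ k) _ _ fun i => by simp
    _ ≤ ∑ j, x k j * x l j := (hx k l).sum_mul_comp_perm_le_sum_mul

lemma wsq_le_sum (n : ℕ) (a b : Fin n → ℝ) (σ : Equiv.Perm (Fin n)) :
    wsq n a b ≤ ∑ i, (a i - b (σ i)) ^ 2 :=
  ciInf_le ⟨0, by rintro _ ⟨τ, rfl⟩; positivity⟩ σ

lemma exists_perm_wsq_eq (n : ℕ) (a b : Fin n → ℝ) :
    ∃ σ : Equiv.Perm (Fin n), wsq n a b = ∑ i, (a i - b (σ i)) ^ 2 := by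
  obtain ⟨σ, hσ⟩ := Finite.exists_min fun σ : Equiv.Perm (Fin n) => ∑ i, (a i - b (σ i)) ^ 2
  exact ⟨σ, le_antisymm (wsq_le_sum n a b σ) (le_ciInf hσ)⟩

theorem topological_mean_minimizes_general (n m : ℕ)
    (x : Fin m → Fin n → ℝ) (hx : ∀ k, Monotone (x k))
    (μ : Fin n → ℝ) (hμ : ∀ i, μ i = (∑ k, x k i) / m)
    (y : Fin n → ℝ) :
    ∑ k, wsq n μ (x k) ≤ ∑ k, wsq n y (x k) := by
  choose σ hσ using fun k => exists_perm_wsq_eq n y (x k)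
  have hsq : ∑ i, ∑ k, x k (σ k i) ^ 2 = ∑ i, ∑ k, x k i ^ 2 := by
    rw [sum_comm, sum_comm (f := fun i k => x k i ^ 2)]
    exact sum_congr rfl fun k _ => Equiv.sum_comp (σ k) fun i => x k i ^ 2
  calc ∑ k, wsq n μ (x k) ≤ ∑ k, ∑ i, (μ i - x k i) ^ 2 :=
        sum_le_sum fun k _ => wsq_le_sum n μ (x k) 1
    _ = ∑ i, (∑ k, x k i ^ 2 - (∑ k, x k i) ^ 2 / m) := by
        rw [sum_comm]
        refine sum_congr rfl fun i _ => ?_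
        simpa [hμ] using sum_mean_sub_sq fun k => x k i
    _ ≤ ∑ i, (∑ k, x k (σ k i) ^ 2 - (∑ k, x k (σ k i)) ^ 2 / m) := by
        simp only [sum_sub_distrib, hsq, ← sum_div]
        gcongr _ - ?_ / _
        exact sum_sq_sum_comp_perm_le x (fun k l => (hx k).monovary (hx l)) σ
    _ ≤ ∑ i, ∑ k, (y i - x k (σ k i)) ^ 2 :=
        sum_le_sum fun i _ => by
          simpa using sum_sq_sub_sq_sum_div_le_sum_sub_sq (fun k => x k (σ k i)) (y i)
    _ = ∑ k, wsq n y (x k) := by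
        rw [sum_comm]
        exact sum_congr rfl fun k _ => (hσ k).symm

/-- The coordinatewise mean of monotone nondecreasing vectors minimizes the sum of
squared Wasserstein-type distances: if `x 1, …, x m : Fin n → ℝ` are monotone
nondecreasing and `μ i = (1/m) ∑ k, x k i`, then for every `y : Fin n → ℝ`,
`∑ k, d(μ, x k)² ≤ ∑ k, d(y, x k)²`. -/
theorem topological_mean_minimizes (n m : ℕ) (hm : 1 ≤ m)
    (x : Fin m → Fin n → ℝ) (hx : ∀ k, Monotone (x k))
    (μ : Fin n → ℝ) (hμ : ∀ i, μ i = (∑ k, x k i) / m)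
    (y : Fin n → ℝ) :
    ∑ k, wsq n μ (x k) ≤ ∑ k, wsq n y (x k) :=
  topological_mean_minimizes_general n m x hx μ hμ y
end

section
/- Cut property: Let G be a finite connected simple graph with an injective edge-weight function w : E(G) → ℝ, and let S be a nonempty proper subset of the vertex set of G such that at least one edge of G has one endpoint in S and one endpoint outside S. Then the unique edge of maximum weight among all edges with one endpoint in S and one endpoint in the complement of S belongs to the unique maximum spanning tree of G. -/
open SimpleGraph

/-- The total edge weight of a graph `T` with respect to the weight function `w`. -/
noncomputable def graphWeight {V : Type*} (w : Sym2 V → ℝ) (T : SimpleGraph V) : ℝ :=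
  ∑ᶠ e ∈ T.edgeSet, w e

/-- `T` is a maximum spanning tree of `G` with respect to the edge weights `w`. -/
def IsMaxSpanningTree {V : Type*} (G : SimpleGraph V) (w : Sym2 V → ℝ)
    (T : SimpleGraph V) : Prop :=
  T ≤ G ∧ T.IsTree ∧
    ∀ T' : SimpleGraph V, T' ≤ G → T'.IsTree → graphWeight w T' ≤ graphWeight w T

/-- The set of edges of `G` with one endpoint in `S` and one endpoint outside `S`. -/
def cutEdges {V : Type*} (G : SimpleGraph V) (S : Set V) : Set (Sym2 V) :=
  {e | e ∈ G.edgeSet ∧ ∃ u v, e = s(u, v) ∧ u ∈ S ∧ v ∉ S}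

/-!
Let `a b` be the cut edge of maximum weight and suppose it is not in the maximum spanning
tree `T`. The path from `a` to `b` in `T` leaves `S` along some tree edge `x y`. Removing `x y`
from `T` separates `a` (which stays with `x`) from `b` (which stays with `y`), so adding `a b`
back yields another spanning tree, heavier by `w s(a, b) - w s(x, y) > 0`.
-/

namespace SimpleGraph

variable {V : Type*}

lemma Reachable.of_forall_adj_reachable {G H : SimpleGraph V}
    (h : ∀ ⦃u v⦄, G.Adj u v → H.Reachable u v) {u v : V} (huv : G.Reachable u v) :
    H.Reachable u v := by
  obtain ⟨p⟩ := huv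
  induction p with
  | nil => exact .rfl
  | cons hadj _ ih => exact (h hadj).trans ih

lemma Walk.IsPath.reachable_deleteEdges_of_mem_darts {G : SimpleGraph V} {a b : V}
    {p : G.Walk a b} (hp : p.IsPath) {d : G.Dart} (hd : d ∈ p.darts) :
    (G.deleteEdges {d.edge}).Reachable a d.fst ∧
      (G.deleteEdges {d.edge}).Reachable d.snd b := by
  induction p with
  | nil => simp at hd
  | @cons u c b hadj q ih =>
    rw [Walk.cons_isPath_iff] at hp
    rw [Walk.darts_cons, List.mem_cons] at hd
    have hq : s(u, c) ∉ q.edges := fun h ↦ hp.2 (q.fst_mem_support_of_mem_edges h)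
    rcases hd with rfl | hd
    · exact ⟨.rfl, reachable_deleteEdges_iff_exists_walk.mpr ⟨q, hq⟩⟩
    · have hne : s(u, c) ≠ d.edge := fun h ↦ hq (h ▸ List.mem_map_of_mem hd)
      have hadj' : (G.deleteEdges {d.edge}).Adj u c := by
        rw [deleteEdges_adj]
        exact ⟨hadj, hne⟩
      obtain ⟨hux, hyb⟩ := ih hp.1 hd
      exact ⟨hadj'.reachable.trans hux, hyb⟩

theorem IsTree.deleteEdges_sup_edge {T : SimpleGraph V} (hT : T.IsTree) {x y a b : V}
    (hxy : T.Adj x y) (hax : (T.deleteEdges {s(x, y)}).Reachable a x)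
    (hby : (T.deleteEdges {s(x, y)}).Reachable b y) :
    (T.deleteEdges {s(x, y)} ⊔ edge a b).IsTree := by
  set T₀ := T.deleteEdges {s(x, y)}
  have hsep : ¬T₀.Reachable x y := isAcyclic_iff_forall_adj_isBridge.mp hT.isAcyclic hxy
  have hab : ¬T₀.Reachable a b := fun h ↦ hsep (hax.symm.trans (h.trans hby))
  have hxy' : (T₀ ⊔ edge a b).Reachable x y := by
    have hadj : (T₀ ⊔ edge a b).Adj a b :=
      Or.inr ((edge_adj ..).mpr ⟨Or.inl ⟨rfl, rfl⟩, fun h ↦ hab (h ▸ .rfl)⟩)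
    exact (hax.mono le_sup_left).symm.trans (hadj.reachable.trans (hby.mono le_sup_left))
  refine ⟨(connected_iff _).mpr ⟨fun u v ↦ ?_, hT.connected.nonempty⟩,
    (hT.isAcyclic.anti (deleteEdges_le _)).sup_edge_of_not_reachable hab⟩
  refine (hT.connected.preconnected u v).of_forall_adj_reachable fun u' v' huv ↦ ?_
  by_cases h : s(u', v') = s(x, y)
  · rcases Sym2.eq_iff.mp h with ⟨rfl, rfl⟩ | ⟨rfl, rfl⟩
    exacts [hxy', hxy'.symm]
  · exact (Adj.reachable ((deleteEdges_adj ..).mpr ⟨huv, h⟩)).mono le_sup_left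

lemma graphWeight_deleteEdges_sup_edge [Finite V] (w : Sym2 V → ℝ) {T : SimpleGraph V}
    {f : Sym2 V} {a b : V} (hf : f ∈ T.edgeSet) (hab : s(a, b) ∉ T.edgeSet) (hne : a ≠ b) :
    graphWeight w (T.deleteEdges {f} ⊔ edge a b) + w f = graphWeight w T + w s(a, b) := by
  have hrest : (T.edgeSet \ {f}).Finite := Set.toFinite _
  have hT : ∑ᶠ e ∈ T.edgeSet, w e = w f + ∑ᶠ e ∈ T.edgeSet \ {f}, w e := by
    rw [← finsum_mem_insert _ (fun h ↦ h.2 rfl) hrest, Set.insert_sdiff_singleton,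
      Set.insert_eq_of_mem hf]
  have hT' : (T.deleteEdges {f} ⊔ edge a b).edgeSet = insert s(a, b) (T.edgeSet \ {f}) := by
    rw [edgeSet_sup, edgeSet_deleteEdges, edgeSet_edge_of_ne hne, Set.union_singleton]
  rw [graphWeight, graphWeight, hT', finsum_mem_insert _ (fun h ↦ hab h.1) hrest, hT]
  ring

end SimpleGraph

theorem cut_property_general {V : Type*} [Fintype V] (G : SimpleGraph V)
    (w : Sym2 V → ℝ)
    (S : Set V)
    (e : Sym2 V) (he : e ∈ cutEdges G S)
    (hmax : ∀ f ∈ cutEdges G S, f ≠ e → w f < w e)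
    (T : SimpleGraph V) (hT : IsMaxSpanningTree G w T) :
    e ∈ T.edgeSet := by
  by_contra heT
  obtain ⟨hab, a, b, rfl, haS, hbS⟩ := he
  obtain ⟨hTG, hTtree, hTmax⟩ := hT
  obtain ⟨p, hp, -⟩ := hTtree.existsUnique_path a b
  obtain ⟨d, hd, hxS, hyS⟩ := p.exists_boundary_dart S haS hbS
  obtain ⟨hax, hyb⟩ := hp.reachable_deleteEdges_of_mem_darts hd
  have hdT : d.edge ∈ T.edgeSet := p.edges_subset_edgeSet (List.mem_map_of_mem hd)
  have hlt : w d.edge < w s(a, b) :=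
    hmax _ ⟨edgeSet_mono hTG hdT, d.fst, d.snd, rfl, hxS, hyS⟩ fun h ↦ heT (h ▸ hdT)
  have htree := hTtree.deleteEdges_sup_edge d.adj hax hyb.symm
  have hle : T.deleteEdges {d.edge} ⊔ edge a b ≤ G :=
    sup_le ((deleteEdges_le _).trans hTG) ((edge_le_iff _).mpr (.inr hab))
  have hexchange := graphWeight_deleteEdges_sup_edge w hdT heT hab.ne
  linarith [hTmax _ hle htree]

/-- Cut property: for a finite connected simple graph `G` with injective edge
weights and a nonempty proper vertex subset `S` crossed by at least one edge,
the unique maximum-weight edge among the edges crossing the cut `(S, Sᶜ)`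
belongs to every (hence the unique) maximum spanning tree of `G`. -/
theorem cut_property {V : Type*} [Fintype V] (G : SimpleGraph V) (hG : G.Connected)
    (w : Sym2 V → ℝ) (hw : Set.InjOn w G.edgeSet)
    (S : Set V) (hS : S.Nonempty) (hS' : S ≠ Set.univ)
    (e : Sym2 V) (he : e ∈ cutEdges G S)
    (hmax : ∀ f ∈ cutEdges G S, f ≠ e → w f < w e)
    (T : SimpleGraph V) (hT : IsMaxSpanningTree G w T) :
    e ∈ T.edgeSet :=
  cut_property_general G w S e he hmax T hT
end

section
/- Deaths occur at non-tree weights: Let p ≥ 2, let w be an injective edge-weight function on the complete graph K_p, let T be the unique maximum spanning tree of (K_p, w), and for ε ∈ ℝ let G_ε be the threshold graph with edge set {e : w(e) > ε}. Then for every ε, the cycle rank satisfies β₁(G_ε) = #{e ∈ E(K_p) ∖ E(T) : w(e) > ε}. In particular, the first Betti number of the graph filtration decreases by exactly one as the threshold passes each non-maximum-spanning-tree edge weight. -/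
/-!
Let `F` be the forest of tree edges of weight `> ε`. By the cycle property of a maximum spanning
tree `T` (an edge `uv` weighs at most every edge of the `T`-path from `u` to `v`, since otherwise
swapping the two gives a heavier spanning tree), the endpoints of every edge of `G_ε` are joined
in `F`, so `G_ε` and `F` have the same components. As a forest satisfies `m + c = p`, the cycle
rank of `G_ε` is `|E(G_ε)| - |E(F)|`, the number of non-tree edges of weight `> ε`.
-/

open SimpleGraph

/-- The number of connected components (zeroth Betti number) of a simple graph. -/
noncomputable def numComp {V : Type*} (G : SimpleGraph V) : ℕ :=
  Nat.card G.ConnectedComponent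

/-- The cycle rank (first Betti number) `β₁(G) = m - p + c` of a finite simple
graph with `p` vertices, `m` edges and `c` connected components. -/
noncomputable def cycleRank {V : Type*} [Fintype V] (G : SimpleGraph V) : ℤ :=
  (G.edgeSet.ncard : ℤ) - (Fintype.card V : ℤ) + (numComp G : ℤ)

/-- The threshold graph of a weighted simple graph at level `ε`: the spanning
subgraph whose edges are the edges of `G` of weight strictly greater than `ε`. -/
def thresholdGraph {V : Type*} (G : SimpleGraph V) (w : Sym2 V → ℝ) (ε : ℝ) :
    SimpleGraph V :=
  SimpleGraph.fromEdgeSet {e | e ∈ G.edgeSet ∧ ε < w e}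


namespace SimpleGraph

variable {V : Type*} {G H T : SimpleGraph V}

lemma Reachable.of_forall_adj (hGH : ∀ ⦃x y : V⦄, G.Adj x y → H.Reachable x y) {x y : V}
    (h : G.Reachable x y) : H.Reachable x y := by
  obtain ⟨p⟩ := h
  induction p with
  | nil => rfl
  | cons hadj _ ih => exact (hGH hadj).trans ih

lemma Reachable.deleteEdges_cases {a b x y : V} (h : G.Reachable x y) :
    (G.deleteEdges {s(a, b)}).Reachable x y ∨
      (G.deleteEdges {s(a, b)}).Reachable x a ∧ (G.deleteEdges {s(a, b)}).Reachable b y ∨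
      (G.deleteEdges {s(a, b)}).Reachable x b ∧ (G.deleteEdges {s(a, b)}).Reachable a y := by
  obtain ⟨p⟩ := h
  induction p with
  | nil => exact .inl .rfl
  | @cons x z y hxz _ ih =>
    by_cases he : s(x, z) = s(a, b)
    · rcases Sym2.eq_iff.mp he with ⟨rfl, rfl⟩ | ⟨rfl, rfl⟩
      · rcases ih with h | ⟨-, h⟩ | ⟨-, h⟩
        · exact .inr (.inl ⟨.rfl, h⟩)
        · exact .inr (.inl ⟨.rfl, h⟩)
        · exact .inl h
      · rcases ih with h | ⟨-, h⟩ | ⟨-, h⟩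
        · exact .inr (.inr ⟨.rfl, h⟩)
        · exact .inl h
        · exact .inr (.inr ⟨.rfl, h⟩)
    · have hxz' : (G.deleteEdges {s(a, b)}).Adj x z := by simpa [deleteEdges_adj, he] using hxz
      rcases ih with h | ⟨h, h'⟩ | ⟨h, h'⟩
      · exact .inl (hxz'.reachable.trans h)
      · exact .inr (.inl ⟨hxz'.reachable.trans h, h'⟩)
      · exact .inr (.inr ⟨hxz'.reachable.trans h, h'⟩)

lemma IsAcyclic.not_reachable_deleteEdges_of_mem_edges (hG : G.IsAcyclic) {u v : V}
    {p : G.Walk u v} (hp : p.IsPath) {e : Sym2 V} (he : e ∈ p.edges) :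
    ¬ (G.deleteEdges {e}).Reachable u v := by
  classical
  induction e using Sym2.ind with | h a b
  rintro h
  obtain ⟨q, hq⟩ := reachable_deleteEdges_iff_exists_walk.mp h
  have hpq : p = q.toPath :=
    congrArg Subtype.val ((hG.subsingleton_path u v).elim ⟨p, hp⟩ q.toPath)
  exact hq (q.edges_toPath_subset_edges (hpq ▸ he))

lemma IsTree.deleteEdges_sup_edge_s9 {a b u v : V} (hT : T.IsTree)
    (huv : ¬ (T.deleteEdges {s(a, b)}).Reachable u v) :
    (T.deleteEdges {s(a, b)} ⊔ edge u v).IsTree := by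
  set D := T.deleteEdges {s(a, b)}
  have hne : u ≠ v := by rintro rfl; exact huv .rfl
  have hDle : D ≤ D ⊔ edge u v := le_sup_left
  have huv' : (D ⊔ edge u v).Adj u v := Or.inr (by simp [edge_adj, hne])
  have hab : (D ⊔ edge u v).Reachable a b := by
    rcases (hT.connected.preconnected u v).deleteEdges_cases (a := a) (b := b) with
      h | ⟨hua, hbv⟩ | ⟨hub, hav⟩
    · exact absurd h huv
    · exact ((hua.mono hDle).symm.trans huv'.reachable).trans (hbv.mono hDle).symm
    · exact ((hav.mono hDle).trans huv'.reachable.symm).trans (hub.mono hDle)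
  have hadj : ∀ ⦃x y : V⦄, T.Adj x y → (D ⊔ edge u v).Reachable x y := by
    intro x y hxy
    by_cases he : s(x, y) = s(a, b)
    · rcases Sym2.eq_iff.mp he with ⟨rfl, rfl⟩ | ⟨rfl, rfl⟩
      · exact hab
      · exact hab.symm
    · exact (Adj.reachable (by simpa [D, deleteEdges_adj, he] using hxy)).mono hDle
  have := hT.connected.nonempty
  exact ⟨⟨fun x y ↦ (hT.connected.preconnected x y).of_forall_adj hadj⟩,
    (hT.isAcyclic.anti (deleteEdges_le _)).sup_edge_of_not_reachable huv⟩

end SimpleGraph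

section

variable {V : Type*} {G H T : SimpleGraph V}

lemma numComp_eq_of_reachable_eq (h : G.Reachable = H.Reachable) : numComp G = numComp H := by
  unfold numComp ConnectedComponent
  rw [h]

lemma numComp_bot [Finite V] : numComp (⊥ : SimpleGraph V) = Nat.card V :=
  Nat.card_congr (Equiv.ofBijective _
    ⟨fun _ _ h ↦ reachable_bot.mp (ConnectedComponent.exact h), Quot.mk_surjective⟩).symm

/-- The components of `G.deleteEdges {s(a, b)}` other than that of `b` map bijectively onto
those of `G`. -/
lemma numComp_deleteEdges_of_isBridge [Finite V] {a b : V} (hadj : G.Adj a b)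
    (hbr : G.IsBridge s(a, b)) :
    numComp (G.deleteEdges {s(a, b)}) = numComp G + 1 := by
  set D := G.deleteEdges {s(a, b)}
  have hab : ¬ D.Reachable a b := isBridge_iff.mp hbr
  let φ : {c : D.ConnectedComponent // c ≠ D.connectedComponentMk b} → G.ConnectedComponent :=
    fun c ↦ c.1.map (Hom.ofLE (deleteEdges_le _))
  have hφ : φ.Bijective := by
    refine ⟨?_, fun c ↦ ?_⟩
    · rintro ⟨c, hc⟩ ⟨c', hc'⟩ h
      induction c using ConnectedComponent.ind with | h x
      induction c' using ConnectedComponent.ind with | h y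
      have hxy : G.Reachable x y := ConnectedComponent.exact h
      rcases hxy.deleteEdges_cases (a := a) (b := b) with h | ⟨-, h⟩ | ⟨h, -⟩
      · exact Subtype.ext (ConnectedComponent.sound h)
      · exact absurd (ConnectedComponent.sound h.symm) hc'
      · exact absurd (ConnectedComponent.sound h) hc
    · induction c using ConnectedComponent.ind with | h x
      by_cases hx : D.connectedComponentMk x = D.connectedComponentMk b
      · refine ⟨⟨D.connectedComponentMk a, fun h ↦ hab (ConnectedComponent.exact h)⟩, ?_⟩
        have hxb : D.Reachable x b := ConnectedComponent.exact hx
        exact ConnectedComponent.sound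
          ((hxb.mono (deleteEdges_le _)).trans hadj.symm.reachable).symm
      · exact ⟨⟨_, hx⟩, rfl⟩
  classical
  unfold numComp
  rw [← Nat.card_congr (Equiv.ofBijective φ hφ), ← Finite.card_option,
    Nat.card_congr (Equiv.optionSubtypeNe _)]

lemma SimpleGraph.IsAcyclic.ncard_edgeSet_add_numComp [Finite V] (hG : G.IsAcyclic) :
    G.edgeSet.ncard + numComp G = Nat.card V := by
  induction hm : G.edgeSet.ncard generalizing G with
  | zero =>
    rw [Set.ncard_eq_zero (Set.toFinite _), edgeSet_eq_empty] at hm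
    rw [hm, numComp_bot, zero_add]
  | succ n ih =>
    obtain ⟨e, he⟩ := Set.nonempty_of_ncard_ne_zero (hm.trans_ne n.succ_ne_zero)
    induction e using Sym2.ind with | h a b
    have hD := ih (hG.anti (deleteEdges_le {s(a, b)}))
      (by rw [edgeSet_deleteEdges, Set.ncard_sdiff_singleton_of_mem he, hm, Nat.add_sub_cancel])
    rw [numComp_deleteEdges_of_isBridge he (isAcyclic_iff_forall_isBridge.mp hG he)] at hD
    omega

lemma graphWeight_deleteEdges_sup_edge [Finite V] (w : Sym2 V → ℝ) {a b u v : V}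
    (hab : T.Adj a b) (huv : ¬ (T.deleteEdges {s(a, b)}).Reachable u v) :
    graphWeight w (T.deleteEdges {s(a, b)} ⊔ edge u v) =
      graphWeight w T - w s(a, b) + w s(u, v) := by
  have hne : u ≠ v := by rintro rfl; exact huv .rfl
  have hnotin : s(u, v) ∉ T.edgeSet \ {s(a, b)} := fun h ↦
    huv (Adj.reachable (by rwa [← mem_edgeSet, edgeSet_deleteEdges]))
  have hfin : (T.edgeSet \ {s(a, b)}).Finite := Set.toFinite _
  have hT : graphWeight w T = w s(a, b) + ∑ᶠ e ∈ T.edgeSet \ {s(a, b)}, w e := by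
    rw [graphWeight, ← finsum_mem_insert _ (fun h ↦ h.2 rfl) hfin, Set.insert_sdiff_singleton,
      Set.insert_eq_of_mem (show s(a, b) ∈ T.edgeSet from hab)]
  rw [hT, graphWeight, edgeSet_sup, edgeSet_deleteEdges, edgeSet_edge_of_ne hne,
    Set.union_singleton, finsum_mem_insert _ hnotin hfin]
  ring

lemma IsMaxSpanningTree.weight_le_of_not_reachable_deleteEdges [Finite V] {w : Sym2 V → ℝ}
    (hT : IsMaxSpanningTree G w T) {a b u v : V} (hab : T.Adj a b) (huv : G.Adj u v)
    (h : ¬ (T.deleteEdges {s(a, b)}).Reachable u v) : w s(u, v) ≤ w s(a, b) := by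
  have hle : T.deleteEdges {s(a, b)} ⊔ edge u v ≤ G :=
    sup_le ((deleteEdges_le _).trans hT.1) (G.edge_le_iff.mpr (.inr huv))
  have := hT.2.2 _ hle (hT.2.1.deleteEdges_sup_edge_s9 h)
  rw [graphWeight_deleteEdges_sup_edge w hab h] at this
  linarith

section thresholdGraph

variable {w : Sym2 V → ℝ} {ε : ℝ}

lemma thresholdGraph_adj {x y : V} :
    (thresholdGraph G w ε).Adj x y ↔ G.Adj x y ∧ ε < w s(x, y) := by
  simp only [thresholdGraph, fromEdgeSet_adj]
  exact ⟨fun h ↦ h.1, fun h ↦ ⟨h, h.1.ne⟩⟩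

lemma edgeSet_thresholdGraph : (thresholdGraph G w ε).edgeSet = {e ∈ G.edgeSet | ε < w e} := by
  ext e
  induction e using Sym2.ind with | h x y
  exact thresholdGraph_adj

lemma thresholdGraph_le : thresholdGraph G w ε ≤ G := fun _ _ h ↦ (thresholdGraph_adj.mp h).1

lemma thresholdGraph_mono (h : T ≤ G) : thresholdGraph T w ε ≤ thresholdGraph G w ε :=
  fun _ _ hxy ↦ let ⟨hT, hε⟩ := thresholdGraph_adj.mp hxy; thresholdGraph_adj.mpr ⟨h hT, hε⟩

lemma ncard_edgeSet_thresholdGraph [Finite V] (h : T ≤ G) :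
    (thresholdGraph G w ε).edgeSet.ncard =
      (thresholdGraph T w ε).edgeSet.ncard + {e ∈ G.edgeSet \ T.edgeSet | ε < w e}.ncard := by
  have hsplit : (thresholdGraph G w ε).edgeSet =
      (thresholdGraph T w ε).edgeSet ∪ {e ∈ G.edgeSet \ T.edgeSet | ε < w e} := by
    ext e
    have := @edgeSet_mono _ _ _ h e
    simp only [edgeSet_thresholdGraph, Set.mem_union, Set.mem_sdiff, Set.mem_ofPred_eq]
    tauto
  have hdisj : Disjoint (thresholdGraph T w ε).edgeSet {e ∈ G.edgeSet \ T.edgeSet | ε < w e} :=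
    Set.disjoint_left.mpr fun _ he he' ↦ he'.1.2 (edgeSet_mono thresholdGraph_le he)
  rw [hsplit, Set.ncard_union_eq hdisj (Set.toFinite _) (Set.toFinite _)]

lemma IsMaxSpanningTree.reachable_thresholdGraph [Finite V] (hT : IsMaxSpanningTree G w T)
    {u v : V} (huv : G.Adj u v) (hε : ε < w s(u, v)) : (thresholdGraph T w ε).Reachable u v := by
  obtain ⟨p, hp⟩ := hT.2.1.connected.exists_isPath u v
  by_contra hnr
  obtain ⟨e, he, hwe⟩ : ∃ e ∈ p.edges, w e ≤ ε := by
    by_contra! hp'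
    exact hnr ⟨p.transfer _ fun e he ↦
      edgeSet_thresholdGraph ▸ ⟨p.edges_subset_edgeSet he, hp' e he⟩⟩
  induction e using Sym2.ind with | h a b
  have := hT.weight_le_of_not_reachable_deleteEdges (p.adj_of_mem_edges he) huv
    (hT.2.1.isAcyclic.not_reachable_deleteEdges_of_mem_edges hp he)
  linarith

lemma IsMaxSpanningTree.reachable_thresholdGraph_eq [Finite V] (hT : IsMaxSpanningTree G w T)
    (ε : ℝ) : (thresholdGraph T w ε).Reachable = (thresholdGraph G w ε).Reachable := by
  ext x y
  refine ⟨fun h ↦ h.mono (thresholdGraph_mono hT.1), fun h ↦ h.of_forall_adj fun u v huv ↦ ?_⟩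
  obtain ⟨huv, hε⟩ := thresholdGraph_adj.mp huv
  exact hT.reachable_thresholdGraph huv hε

end thresholdGraph

end

theorem deaths_at_nontree_weights_general (p : ℕ) (w : Sym2 (Fin p) → ℝ)
    (T : SimpleGraph (Fin p)) (hT : IsMaxSpanningTree ⊤ w T) (ε : ℝ) :
    cycleRank (thresholdGraph ⊤ w ε)
      = ({e ∈ (⊤ : SimpleGraph (Fin p)).edgeSet \ T.edgeSet | ε < w e}.ncard : ℤ) := by
  have hforest :=
    (hT.2.1.isAcyclic.anti (thresholdGraph_le (w := w) (ε := ε))).ncard_edgeSet_add_numComp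
  rw [cycleRank, ncard_edgeSet_thresholdGraph hT.1,
    ← numComp_eq_of_reachable_eq (hT.reachable_thresholdGraph_eq ε), ← Nat.card_eq_fintype_card,
    ← hforest]
  push_cast
  ring

/-- Deaths occur at non-tree weights: for the complete graph `K_p` (`p ≥ 2`) with
injective edge weights `w` and maximum spanning tree `T`, the cycle rank of the
threshold graph `G_ε` equals `#{e ∈ E(K_p) \ E(T) : w e > ε}` for every `ε`. -/
theorem deaths_at_nontree_weights (p : ℕ) (hp : 2 ≤ p) (w : Sym2 (Fin p) → ℝ)
    (hw : Set.InjOn w (⊤ : SimpleGraph (Fin p)).edgeSet)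
    (T : SimpleGraph (Fin p)) (hT : IsMaxSpanningTree ⊤ w T) (ε : ℝ) :
    cycleRank (thresholdGraph ⊤ w ε)
      = ({e ∈ (⊤ : SimpleGraph (Fin p)).edgeSet \ T.edgeSet | ε < w e}.ncard : ℤ) :=
  deaths_at_nontree_weights_general p w T hT ε
end
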